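/- Let k be a field, A = k[z,w]/(zw), and consider the maps φ: A → A⊕A, φ(a) = (za, wa), and ψ: A⊕A → Ω^1_{A/k}, ψ(f,g) = f·dw + g·dz. Then the sequence 0 → A → A⊕A → Ω^1_{A/k} → 0 is exact. -/

import Mathlib

set_option synthInstance.maxHeartbeats 1000000
set_option maxHeartbeats 1000000

open MvPolynomial

namespace stmt6

variable (k : Type*) [Field k]

/-- `A = k[z,w]/(zw)`, with `z = X 0`, `w = X 1`. -/
noncomputable abbrev A := MvPolynomial (Fin 2) k ⧸
  Ideal.span {(X 0 * X 1 : MvPolynomial (Fin 2) k)}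

noncomputable def z : A k := Ideal.Quotient.mk _ (X 0)
noncomputable def w : A k := Ideal.Quotient.mk _ (X 1)

/-- `φ : A → A ⊕ A`, `a ↦ (z a, w a)`. -/
noncomputable def φ : A k →ₗ[A k] A k × A k :=
  ((LinearMap.lsmul (A k) (A k)) (z k)).prod ((LinearMap.lsmul (A k) (A k)) (w k))

/-- `ψ : A ⊕ A → Ω¹_{A/k}`, `(f, g) ↦ f·dw + g·dz`. -/
noncomputable def ψ : A k × A k →ₗ[A k] Ω[(A k)⁄k] :=
  (LinearMap.toSpanSingleton (A k) _ ((KaehlerDifferential.D k (A k)) (w k))).coprod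
    (LinearMap.toSpanSingleton (A k) _ ((KaehlerDifferential.D k (A k)) (z k)))

/-
With `P = k[X₀, X₁]` and `f = X₀X₁`, the conormal sequence `(f)/(f²) → A ⊗_P Ω_P → Ω_A → 0` of
`A = P/(f)` is exact, so the kernel of `A ⊗_P Ω_P → Ω_A` is `A · (1 ⊗ df)`. As `Ω_P` is free on
`dX₀, dX₁`, `(a, b) ↦ a ⊗ dX₁ + b ⊗ dX₀` identifies `A ⊕ A` with `A ⊗_P Ω_P`, turning `ψ` into
`A ⊗_P Ω_P → Ω_A` and `(z, w)` into `1 ⊗ df = z ⊗ dX₁ + w ⊗ dX₀`; this gives exactness at `A ⊕ A`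
and at `Ω_A`. For injectivity of `φ`, lift `a` to `p ∈ P`: `za = wa = 0` means `X₁ ∣ p` and
`X₀ ∣ p`, hence `X₀X₁ ∣ p` because `X₀` is prime and does not divide `X₁`.
-/
open KaehlerDifferential TensorProduct

theorem _root_.KaehlerDifferential.ker_mapBaseChange_quotient_span_singleton
    {R P : Type*} [CommRing R] [CommRing P] [Algebra R P] (f : P) :
    LinearMap.ker (mapBaseChange R P (P ⧸ Ideal.span {f})) =
      (P ⧸ Ideal.span {f}) ∙ (1 ⊗ₜ D R P f) := by
  apply le_antisymm
  · intro x hx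
    obtain ⟨y, rfl⟩ := (exact_kerCotangentToTensor_mapBaseChange R P _
      Ideal.Quotient.mk_surjective x).1 hx
    obtain ⟨⟨y, hy⟩, rfl⟩ := Ideal.toCotangent_surjective _ y
    obtain ⟨q, rfl⟩ := Ideal.mem_span_singleton'.1 (by simpa using hy)
    refine Submodule.mem_span_singleton.2 ⟨Ideal.Quotient.mk _ q, ?_⟩
    rw [kerCotangentToTensor_toCotangent, Derivation.leibniz, tmul_add, tmul_smul, tmul_smul,
      ← algebraMap_smul (P ⧸ Ideal.span {f}) f, ← algebraMap_smul (P ⧸ Ideal.span {f}) q]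
    simp
  · rw [Submodule.span_singleton_le_iff_mem, LinearMap.mem_ker, mapBaseChange_tmul, map_D]
    simp

theorem _root_.Ideal.Quotient.eq_zero_of_mk_mul_eq_zero_of_mk_mul_eq_zero
    {R : Type*} [CommRing R] [IsDomain R] {a b : R}
    (ha : Prime a) (hb : b ≠ 0) (hab : ¬ a ∣ b) {x : R ⧸ Ideal.span {a * b}}
    (hax : Ideal.Quotient.mk _ a * x = 0) (hbx : Ideal.Quotient.mk _ b * x = 0) : x = 0 := by
  obtain ⟨p, rfl⟩ := Ideal.Quotient.mk_surjective x
  simp only [← map_mul, Ideal.Quotient.eq_zero_iff_mem, Ideal.mem_span_singleton] at hax hbx ⊢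
  obtain ⟨q, rfl⟩ : b ∣ p := (mul_dvd_mul_iff_left ha.ne_zero).1 hax
  have hap : a ∣ b * q := (mul_dvd_mul_iff_right hb).1 (by simpa [mul_comm] using hbx)
  exact (mul_comm a b) ▸ mul_dvd_mul_left b ((ha.dvd_or_dvd hap).resolve_left hab)

local notation "P" => MvPolynomial (Fin 2) k

noncomputable def prodEquivTensor : (A k × A k) ≃ₗ[A k] A k ⊗[P] Ω[P⁄k] :=
  (LinearEquiv.prodComm (A k) _ _).trans <| (LinearEquiv.piFinTwo (A k) fun _ ↦ A k).symm.trans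
    ((mvPolynomialBasis k (Fin 2)).baseChange (A k)).equivFun.symm

lemma prodEquivTensor_apply (f g : A k) :
    prodEquivTensor k (f, g) = f ⊗ₜ D k P (X 1) + g ⊗ₜ D k P (X 0) := by
  simp [prodEquivTensor, Fin.sum_univ_two, smul_tmul', add_comm]

lemma mapBaseChange_comp_prodEquivTensor :
    mapBaseChange k P (A k) ∘ₗ (prodEquivTensor k).toLinearMap = ψ k := by
  refine LinearMap.ext fun ⟨f, g⟩ ↦ ?_
  simp only [LinearMap.comp_apply, LinearEquiv.coe_coe, prodEquivTensor_apply, map_add,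
    mapBaseChange_tmul, map_D]
  rfl

lemma prodEquivTensor_z_w : prodEquivTensor k (z k, w k) = 1 ⊗ₜ D k P (X 0 * X 1) := by
  have h (p : P) : p • (1 : A k) = Ideal.Quotient.mk _ p :=
    (Algebra.algebraMap_eq_smul_one p).symm
  rw [prodEquivTensor_apply, Derivation.leibniz, tmul_add, tmul_smul, tmul_smul, smul_tmul',
    smul_tmul', h, h]
  rfl

lemma φ_eq_toSpanSingleton : φ k = LinearMap.toSpanSingleton (A k) _ (z k, w k) := by
  refine LinearMap.ext fun a ↦ ?_
  simp [φ, mul_comm]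

/-- for `A = k[z,w]/(zw)` the sequence
`0 → A --φ--> A ⊕ A --ψ--> Ω¹_{A/k} → 0`, with `φ(a) = (za, wa)` and
`ψ(f,g) = f·dw + g·dz`, is exact. -/
theorem stmt6 :
    Function.Injective (φ k) ∧ LinearMap.range (φ k) = LinearMap.ker (ψ k) ∧
      Function.Surjective (ψ k) := by
  have hker : LinearMap.ker (ψ k) = A k ∙ (z k, w k) := by
    rw [← mapBaseChange_comp_prodEquivTensor, LinearMap.ker_comp,
      ker_mapBaseChange_quotient_span_singleton, ← prodEquivTensor_z_w,
      Submodule.comap_equiv_eq_map_symm, Submodule.map_span]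
    simp
  refine ⟨?_, ?_, ?_⟩
  · refine (injective_iff_map_eq_zero _).2 fun a ha ↦ ?_
    obtain ⟨hza, hwa⟩ : z k * a = 0 ∧ w k * a = 0 := Prod.mk_eq_zero.1 ha
    exact Ideal.Quotient.eq_zero_of_mk_mul_eq_zero_of_mk_mul_eq_zero X_prime (X_ne_zero 1)
      (by simp [X_dvd_X]) hza hwa
  · rw [φ_eq_toSpanSingleton, ← LinearMap.span_singleton_eq_range, hker]
  · rw [← mapBaseChange_comp_prodEquivTensor]
    exact (mapBaseChange_surjective k P (A k) Ideal.Quotient.mk_surjective).comp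
      (prodEquivTensor k).surjective

end stmt6
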